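/- arXiv:1303.4432 — 2 statements merged into one kernel-verified Lean document; each statement's English description precedes it below -/
import Mathlib

section
/- (Klüppelberg) If a distribution function G on ℝ belongs to the class S*, then G is subexponential. -/
/-!
Write `r = Ḡ` and `m = ∫₀^∞ r`. Since `S*` only involves `r` on `ℝ₊`, `G⁺` is again in `S*`,
so it suffices to treat laws on `ℝ₊`. For those, inclusion–exclusion gives
`P(X + Y > x) ≥ 2 r(x) - r(x)²`. For the upper bound fix `h > 0`: if `X + Y > x` and neither
summand exceeds `x - h`, then both are `≥ h`, and averaging over a window of length `h`
bounds the probability of this event by `(∫₀^{x-h} r(x-h-y) r(y) dy) / h ∼ 2 m r(x - h) / h`.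
Since `S*` forces `G` to be long-tailed, `r(x - h) ∼ r(x)`, so
`limsup P(X + Y > x) / r(x) ≤ 2 + 2 m / h` for every `h`.
-/
open MeasureTheory ProbabilityTheory Filter Set
open scoped ENNReal ENat

noncomputable section

/-- The tail (right-tail) distribution function `F̄(x) = μ((x,∞))` of a law `μ` on `ℝ`. -/
def rtail (μ : Measure ℝ) (x : ℝ) : ℝ := (μ (Set.Ioi x)).toReal

/-- `μ` (with distribution function `F`) is long-tailed (LT): `F̄(x) > 0` for all `x` and
`F̄(x-h)/F̄(x) → 1` as `x → ∞` for every fixed `h > 0`. -/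
def LongTailed (μ : Measure ℝ) : Prop :=
  (∀ x : ℝ, 0 < μ (Set.Ioi x)) ∧
    ∀ h : ℝ, 0 < h →
      Filter.Tendsto (fun x : ℝ => rtail μ (x - h) / rtail μ x) Filter.atTop (nhds 1)

/-- The distribution `μ` (with distribution function `G`) belongs to the class `S*`:
`Ḡ(x) > 0` for all `x` and `∫_0^x Ḡ(x-y) Ḡ(y) dy ∼ 2 m_{G⁺} Ḡ(x)` as `x → ∞`,
where `m_{G⁺} = ∫_0^∞ Ḡ(t) dt`. -/
def MemSstar (μ : Measure ℝ) : Prop :=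
  (∀ x : ℝ, 0 < μ (Set.Ioi x)) ∧
    Filter.Tendsto
      (fun x : ℝ => (∫ y in (0:ℝ)..x, rtail μ (x - y) * rtail μ y) /
        (2 * (∫ y in Set.Ioi (0:ℝ), rtail μ y) * rtail μ x))
      Filter.atTop (nhds 1)

/-- The partial sums `S_n` of the random walk: `walk ξ n = ξ 0 + ⋯ + ξ (n-1)`,
where `ξ i` denotes the increment `ξ_{i+1}` of the paper (so `S_0 = 0`). -/
def walk {Ω : Type*} (ξ : ℕ → Ω → ℝ) (n : ℕ) (ω : Ω) : ℝ := ∑ i ∈ Finset.range n, ξ i ω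

/-- The convolution of two laws on `ℝ`: the law of the sum of independent copies. -/
def mconv (μ ν : Measure ℝ) : Measure ℝ := (μ.prod ν).map (fun p => p.1 + p.2)

/-- The law of `max(φ, 0)` for `φ ∼ ν`; its distribution function is `G⁺ = G·1_{ℝ₊}`. -/
def plusPart (ν : Measure ℝ) : Measure ℝ := ν.map (fun t => max t 0)

/-- A distribution (function `G`) on `ℝ₊` is subexponential: `Ḡ(x) > 0` for all `x` and
`(1 - G*G)(x)/Ḡ(x) → 2` as `x → ∞`. -/
def SubexpPos (ν : Measure ℝ) : Prop :=
  (∀ x : ℝ, 0 < ν (Set.Ioi x)) ∧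
    Filter.Tendsto (fun x : ℝ => ((mconv ν ν) (Set.Ioi x)).toReal / rtail ν x)
      Filter.atTop (nhds 2)

/-- A distribution `G` on `ℝ` is subexponential iff `G⁺` is subexponential. -/
def Subexponential (ν : Measure ℝ) : Prop := SubexpPos (plusPart ν)

open Topology

def tailConv (μ : Measure ℝ) (x : ℝ) : ℝ := ∫ y in (0:ℝ)..x, rtail μ (x - y) * rtail μ y

section Tail

variable {μ : Measure ℝ}

lemma rtail_eq_measureReal (x : ℝ) : rtail μ x = μ.real (Ioi x) := rfl

lemma rtail_nonneg (x : ℝ) : 0 ≤ rtail μ x := ENNReal.toReal_nonneg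

variable [IsFiniteMeasure μ]

lemma rtail_antitone : Antitone (rtail μ) := fun _ _ hab =>
  measureReal_mono (Ioi_subset_Ioi hab)

lemma rtail_pos {x : ℝ} (hx : 0 < μ (Ioi x)) : 0 < rtail μ x :=
  ENNReal.toReal_pos hx.ne' (measure_ne_top μ _)

lemma ofReal_rtail (x : ℝ) : ENNReal.ofReal (rtail μ x) = μ (Ioi x) :=
  ENNReal.ofReal_toReal (measure_ne_top μ _)

lemma tendsto_rtail_atTop : Tendsto (rtail μ) atTop (𝓝 0) := by
  have h := tendsto_measure_iInter_atTop (μ := μ) (s := Ioi)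
    (fun _ => measurableSet_Ioi.nullMeasurableSet) (fun _ _ hab => Ioi_subset_Ioi hab)
    ⟨0, measure_ne_top μ _⟩
  rw [show ⋂ x : ℝ, Ioi x = ∅ from iInter_eq_empty_iff.2 fun x => ⟨x, lt_irrefl x⟩,
    measure_empty] at h
  exact (ENNReal.tendsto_toReal ENNReal.zero_ne_top).comp h

lemma sub_mul_rtail_le_integral {a b : ℝ} (hab : a ≤ b) :
    (b - a) * rtail μ b ≤ ∫ y in a..b, rtail μ y := by
  rw [← smul_eq_mul, ← intervalIntegral.integral_const]
  exact intervalIntegral.integral_mono_on hab intervalIntegrable_const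
    rtail_antitone.intervalIntegrable fun y hy => rtail_antitone hy.2

lemma intervalIntegrable_rtail_mul_rtail (x a b : ℝ) :
    IntervalIntegrable (fun y => rtail μ (x - y) * rtail μ y) volume a b := by
  rw [intervalIntegrable_iff]
  refine Integrable.bdd_mul (c := μ.real univ) rtail_antitone.intervalIntegrable.def'
    (rtail_antitone.measurable.comp (measurable_const.sub measurable_id)).aestronglyMeasurable ?_
  filter_upwards with y
  rw [Real.norm_of_nonneg (rtail_nonneg _)]
  exact measureReal_mono (subset_univ _)

lemma tailConv_eq_two_mul (x : ℝ) :
    tailConv μ x = 2 * ∫ y in (0:ℝ)..x / 2, rtail μ (x - y) * rtail μ y := by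
  have hsymm : ∫ y in x / 2..x, rtail μ (x - y) * rtail μ y
      = ∫ y in (0:ℝ)..x / 2, rtail μ (x - y) * rtail μ y := by
    have h := intervalIntegral.integral_comp_sub_left
      (fun y => rtail μ (x - y) * rtail μ y) (a := 0) (b := x / 2) x
    simp only [sub_sub_cancel, sub_zero, sub_half] at h
    rw [← h]
    simp_rw [mul_comm]
  rw [tailConv, ← intervalIntegral.integral_add_adjacent_intervals
    (intervalIntegrable_rtail_mul_rtail x 0 (x / 2)) (intervalIntegrable_rtail_mul_rtail x _ x),
    hsymm, two_mul]

lemma rtail_sub_mul_integral_le {a b : ℝ} (hab : a ≤ b) (x : ℝ) :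
    rtail μ (x - a) * ∫ y in a..b, rtail μ y ≤ ∫ y in a..b, rtail μ (x - y) * rtail μ y := by
  rw [← intervalIntegral.integral_const_mul]
  refine intervalIntegral.integral_mono_on hab
    (rtail_antitone.intervalIntegrable.const_mul _) (intervalIntegrable_rtail_mul_rtail x a b)
    fun y hy => ?_
  exact mul_le_mul_of_nonneg_right (rtail_antitone (by linarith [hy.1])) (rtail_nonneg y)

lemma two_mul_add_le_tailConv {h x : ℝ} (hh : 0 ≤ h) (hx : h ≤ x / 2) :
    2 * (rtail μ x * (∫ y in (0:ℝ)..h, rtail μ y)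
      + rtail μ (x - h) * ∫ y in h..x / 2, rtail μ y) ≤ tailConv μ x := by
  rw [tailConv_eq_two_mul, ← intervalIntegral.integral_add_adjacent_intervals
    (intervalIntegrable_rtail_mul_rtail x 0 h) (intervalIntegrable_rtail_mul_rtail x h (x / 2))]
  have hhead := rtail_sub_mul_integral_le (μ := μ) hh x
  rw [sub_zero] at hhead
  linarith [rtail_sub_mul_integral_le (μ := μ) hx x]

end Tail

namespace MemSstar

variable {μ : Measure ℝ}

lemma integral_rtail_pos (hμ : MemSstar μ) : 0 < ∫ y in Ioi (0:ℝ), rtail μ y := by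
  refine (setIntegral_nonneg measurableSet_Ioi fun y _ => rtail_nonneg y).lt_of_ne' fun hm => ?_
  have h : Tendsto (fun _ : ℝ => (0:ℝ)) atTop (𝓝 1) := hμ.2.congr fun x => by simp [hm]
  exact zero_ne_one (tendsto_nhds_unique tendsto_const_nhds h)

lemma integrableOn_rtail (hμ : MemSstar μ) : IntegrableOn (rtail μ) (Ioi 0) := by
  by_contra h
  exact hμ.integral_rtail_pos.ne' (integral_undef h)

variable [IsFiniteMeasure μ]

lemma tendsto_tailConv_div (hμ : MemSstar μ) :
    Tendsto (fun x => tailConv μ x / (2 * rtail μ x)) atTop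
      (𝓝 (∫ y in Ioi (0:ℝ), rtail μ y)) := by
  simpa using (hμ.2.mul_const (∫ y in Ioi (0:ℝ), rtail μ y)).congr fun x => by
    have := (rtail_pos (hμ.1 x)).ne'
    have := hμ.integral_rtail_pos.ne'
    rw [tailConv]
    field_simp

/-- In `tailConv μ x ≥ 2 (r(x) ∫₀ʰ r + r(x-h) ∫ₕ^{x/2} r)` the left side is
`~ 2 r(x) ∫₀^∞ r`, while `∫ₕ^{x/2} r → ∫ₕ^∞ r`, which forces `r(x-h) ≲ r(x)`. -/
theorem longTailed (hμ : MemSstar μ) : LongTailed μ := by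
  refine ⟨hμ.1, fun h hh => ?_⟩
  set m := ∫ y in Ioi (0:ℝ), rtail μ y
  set mh := ∫ y in (0:ℝ)..h, rtail μ y
  have hJ : Tendsto (fun x => ∫ y in h..x / 2, rtail μ y) atTop (𝓝 (m - mh)) := by
    refine ((intervalIntegral_tendsto_integral_Ioi 0 hμ.integrableOn_rtail
      (tendsto_id.atTop_div_const two_pos)).sub_const mh).congr fun x => ?_
    exact intervalIntegral.integral_interval_sub_left rtail_antitone.intervalIntegrable
      rtail_antitone.intervalIntegrable
  have hJ_ge : ∀ᶠ x in atTop, rtail μ (h + 1) ≤ ∫ y in h..x / 2, rtail μ y := by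
    filter_upwards [eventually_ge_atTop (2 * h + 2)] with x hx
    calc rtail μ (h + 1) = (h + 1 - h) * rtail μ (h + 1) := by ring
      _ ≤ ∫ y in h..h + 1, rtail μ y := sub_mul_rtail_le_integral (by linarith)
      _ ≤ ∫ y in h..x / 2, rtail μ y :=
        intervalIntegral.integral_mono_interval le_rfl (by linarith) (by linarith)
          (.of_forall fun y => rtail_nonneg y) rtail_antitone.intervalIntegrable
  have hJ_pos : 0 < m - mh := (rtail_pos (hμ.1 _)).trans_le (ge_of_tendsto hJ hJ_ge)
  have hU : Tendsto (fun x => (tailConv μ x / (2 * rtail μ x) - mh) / ∫ y in h..x / 2, rtail μ y)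
      atTop (𝓝 1) := by
    have h := (hμ.tendsto_tailConv_div.sub_const mh).div hJ hJ_pos.ne'
    rwa [div_self hJ_pos.ne'] at h
  refine tendsto_of_tendsto_of_tendsto_of_le_of_le' tendsto_const_nhds hU ?_ ?_
  · filter_upwards with x
    exact (one_le_div (rtail_pos (hμ.1 x))).2 (rtail_antitone (by linarith))
  · filter_upwards [eventually_ge_atTop (2 * h), hJ_ge] with x hx hJx
    have hrx := rtail_pos (hμ.1 x)
    have hJx_pos := (rtail_pos (hμ.1 _)).trans_le hJx
    have hφ := two_mul_add_le_tailConv (μ := μ) hh.le (by linarith : h ≤ x / 2)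
    rw [div_le_div_iff₀ hrx hJx_pos]
    have hexpand : (tailConv μ x / (2 * rtail μ x) - mh) * rtail μ x
        = tailConv μ x / 2 - mh * rtail μ x := by
      field_simp
    rw [hexpand]
    linarith

end MemSstar

section Convolution

variable {μ : Measure ℝ}

lemma mconv_apply_Ioi (μ ν : Measure ℝ) (x : ℝ) :
    mconv μ ν (Ioi x) = μ.prod ν {p | x < p.1 + p.2} :=
  Measure.map_apply (measurable_fst.add measurable_snd) measurableSet_Ioi

lemma two_mul_rtail_sub_sq_le_mconv [IsProbabilityMeasure μ] (h0 : μ (Ici 0) = 1) {x : ℝ}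
    (hx : 0 ≤ x) : 2 * rtail μ x - rtail μ x ^ 2 ≤ (mconv μ μ (Ioi x)).toReal := by
  have h0' : μ.real (Ici 0) = 1 := by rw [measureReal_def, h0, ENNReal.toReal_one]
  have hinter : Ioi x ×ˢ Ici 0 ∩ Ici 0 ×ˢ Ioi x = Ioi x ×ˢ Ioi x := by
    have hsub0 : Ioi x ⊆ Ici 0 := (Ioi_subset_Ioi hx).trans Ioi_subset_Ici_self
    rw [prod_inter_prod, inter_eq_left.2 hsub0, inter_eq_right.2 hsub0]
  have hsub : Ioi x ×ˢ Ici 0 ∪ Ici 0 ×ˢ Ioi x ⊆ {p : ℝ × ℝ | x < p.1 + p.2} := by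
    rintro ⟨u, v⟩ (⟨hu, hv⟩ | ⟨hu, hv⟩) <;>
      · simp only [mem_Ioi, mem_Ici] at hu hv
        show x < u + v
        linarith
  have hincl_excl := measureReal_union_add_inter (μ := μ.prod μ) (s := Ioi x ×ˢ Ici (0:ℝ))
    (t := Ici 0 ×ˢ Ioi x) (measurableSet_Ici.prod measurableSet_Ioi)
  rw [hinter, measureReal_prod_prod, measureReal_prod_prod, measureReal_prod_prod, h0']
    at hincl_excl
  rw [mconv_apply_Ioi, ← measureReal_def]
  have := measureReal_mono (μ := μ.prod μ) hsub
  rw [rtail_eq_measureReal, sq]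
  linarith

lemma tailConv_nonneg {x : ℝ} (hx : 0 ≤ x) : 0 ≤ tailConv μ x :=
  intervalIntegral.integral_nonneg hx fun _ _ => mul_nonneg (rtail_nonneg _) (rtail_nonneg _)

lemma ofReal_le_volume_Ioc_inter_Ioo {h z u v : ℝ} (hz : h ≤ z) (hu : h ≤ u) (hv : h ≤ v)
    (huv : z + h < u + v) : ENNReal.ofReal h ≤ volume (Ioc 0 z ∩ Ioo (z - u) v) := by
  calc ENNReal.ofReal h ≤ ENNReal.ofReal (z ⊓ v - 0 ⊔ (z - u)) := by
        apply ENNReal.ofReal_le_ofReal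
        rcases max_cases 0 (z - u) with ⟨h1, -⟩ | ⟨h1, -⟩ <;>
          rcases min_cases z v with ⟨h2, -⟩ | ⟨h2, -⟩ <;> rw [h1, h2] <;> linarith
    _ = volume (Ioo 0 z ∩ Ioo (z - u) v) := by rw [Ioo_inter_Ioo, Real.volume_Ioo]
    _ ≤ volume (Ioc 0 z ∩ Ioo (z - u) v) := by gcongr; exact Ioo_subset_Ioc_self

variable [IsFiniteMeasure μ]

lemma setLIntegral_measure_Ioi_mul_eq_ofReal_tailConv {z : ℝ} (hz : 0 ≤ z) :
    ∫⁻ y in Ioc 0 z, μ (Ioi (z - y)) * μ (Ioi y) = ENNReal.ofReal (tailConv μ z) := by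
  simp_rw [← ofReal_rtail, ← ENNReal.ofReal_mul (rtail_nonneg _)]
  rw [← ofReal_integral_eq_lintegral_ofReal, tailConv, intervalIntegral.integral_of_le hz]
  · exact (intervalIntegrable_iff_integrableOn_Ioc_of_le hz).1
      (intervalIntegrable_rtail_mul_rtail z 0 z)
  · exact .of_forall fun y => mul_nonneg (rtail_nonneg _) (rtail_nonneg _)

/-- Each pair `(u, v)` counted on the left sees a window of length at least `h` of
`y ∈ (0, x - h]` with `u > x - h - y` and `v > y`; integrating over `y` first gives
`tailConv μ (x - h)`. -/
lemma ofReal_mul_prod_le_tailConv {h x : ℝ} (hh : 0 ≤ h) (hx : 2 * h ≤ x) :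
    ENNReal.ofReal h * μ.prod μ {p | h ≤ p.1 ∧ h ≤ p.2 ∧ x < p.1 + p.2}
      ≤ ENNReal.ofReal (tailConv μ (x - h)) := by
  set z := x - h
  set W : Set (ℝ × ℝ × ℝ) := {q | z - q.2.1 < q.1 ∧ q.1 < q.2.2}
  have hW : MeasurableSet W :=
    (measurableSet_lt (measurable_const.sub (measurable_fst.comp measurable_snd))
      measurable_fst).inter (measurableSet_lt measurable_fst (measurable_snd.comp measurable_snd))
  have hB : MeasurableSet {p : ℝ × ℝ | h ≤ p.1 ∧ h ≤ p.2 ∧ x < p.1 + p.2} :=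
    (measurableSet_le measurable_const measurable_fst).inter
      ((measurableSet_le measurable_const measurable_snd).inter
        (measurableSet_lt measurable_const (measurable_fst.add measurable_snd)))
  calc ENNReal.ofReal h * μ.prod μ {p | h ≤ p.1 ∧ h ≤ p.2 ∧ x < p.1 + p.2}
      = ∫⁻ p, {p : ℝ × ℝ | h ≤ p.1 ∧ h ≤ p.2 ∧ x < p.1 + p.2}.indicator
          (fun _ => ENNReal.ofReal h) p ∂μ.prod μ := by
        rw [lintegral_indicator hB, setLIntegral_const, mul_comm]
    _ ≤ ∫⁻ p, volume.restrict (Ioc 0 z) ((fun y => (y, p)) ⁻¹' W) ∂μ.prod μ := by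
        refine lintegral_mono fun p =>
          indicator_apply_le' (fun ⟨hu, hv, huv⟩ => ?_) fun _ => zero_le
        rw [Measure.restrict_apply' measurableSet_Ioc, inter_comm]
        exact ofReal_le_volume_Ioc_inter_Ioo (by linarith) hu hv (by linarith)
    _ = (volume.restrict (Ioc 0 z)).prod (μ.prod μ) W :=
        (Measure.prod_apply_symm (μ := volume.restrict (Ioc 0 z)) (ν := μ.prod μ) hW).symm
    _ = ∫⁻ y in Ioc 0 z, μ (Ioi (z - y)) * μ (Ioi y) := by
        rw [Measure.prod_apply hW]
        congr with y
        rw [← Measure.prod_prod]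
        congr 1
        ext p
        simp [W, sub_lt_comm]
    _ = ENNReal.ofReal (tailConv μ z) :=
        setLIntegral_measure_Ioi_mul_eq_ofReal_tailConv (by linarith)

lemma mconv_self_Ioi_le [IsProbabilityMeasure μ] {h x : ℝ} (hh : 0 < h) (hx : 2 * h ≤ x) :
    (mconv μ μ (Ioi x)).toReal ≤ 2 * rtail μ (x - h) + tailConv μ (x - h) / h := by
  set B := {p : ℝ × ℝ | h ≤ p.1 ∧ h ≤ p.2 ∧ x < p.1 + p.2}
  have hB : (μ.prod μ).real B ≤ tailConv μ (x - h) / h := by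
    rw [le_div_iff₀ hh, mul_comm, ← ENNReal.ofReal_le_ofReal_iff (tailConv_nonneg (by linarith)),
      ENNReal.ofReal_mul hh.le, ofReal_measureReal]
    exact ofReal_mul_prod_le_tailConv hh.le hx
  have hsub : {p : ℝ × ℝ | x < p.1 + p.2} ⊆ Ioi (x - h) ×ˢ univ ∪ univ ×ˢ Ioi (x - h) ∪ B := by
    rintro ⟨u, v⟩ (huv : x < u + v)
    by_cases hu : x - h < u
    · exact Or.inl (Or.inl ⟨hu, trivial⟩)
    by_cases hv : x - h < v
    · exact Or.inl (Or.inr ⟨trivial, hv⟩)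
    exact Or.inr ⟨by linarith, by linarith, huv⟩
  rw [mconv_apply_Ioi, ← measureReal_def]
  calc (μ.prod μ).real {p | x < p.1 + p.2}
      ≤ (μ.prod μ).real (Ioi (x - h) ×ˢ univ) + (μ.prod μ).real (univ ×ˢ Ioi (x - h))
        + (μ.prod μ).real B :=
        (measureReal_mono hsub).trans ((measureReal_union_le _ _).trans
          (add_le_add_left (measureReal_union_le _ _) _))
    _ ≤ 2 * rtail μ (x - h) + tailConv μ (x - h) / h := by
        rw [measureReal_prod_prod, measureReal_prod_prod, probReal_univ, rtail_eq_measureReal]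
        linarith

end Convolution

section PlusPart

variable {ν : Measure ℝ}

lemma measurable_max_zero : Measurable fun t : ℝ => max t 0 := measurable_id.max measurable_const

lemma plusPart_Ioi_of_nonneg {x : ℝ} (hx : 0 ≤ x) : plusPart ν (Ioi x) = ν (Ioi x) := by
  rw [plusPart, Measure.map_apply measurable_max_zero measurableSet_Ioi]
  congr 1
  ext t
  simp [hx.not_gt]

lemma plusPart_Ioi_of_neg [IsProbabilityMeasure ν] {x : ℝ} (hx : x < 0) :
    plusPart ν (Ioi x) = 1 := by
  rw [plusPart, Measure.map_apply measurable_max_zero measurableSet_Ioi,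
    show (fun t : ℝ => max t 0) ⁻¹' Ioi x = univ from
      eq_univ_of_forall fun t => hx.trans_le (le_max_right t 0), measure_univ]

lemma plusPart_Ici_zero [IsProbabilityMeasure ν] : plusPart ν (Ici 0) = 1 := by
  rw [plusPart, Measure.map_apply measurable_max_zero measurableSet_Ici,
    show (fun t : ℝ => max t 0) ⁻¹' Ici 0 = univ from
      eq_univ_of_forall fun t => le_max_right t 0, measure_univ]

instance [IsProbabilityMeasure ν] : IsProbabilityMeasure (plusPart ν) :=
  Measure.isProbabilityMeasure_map measurable_max_zero.aemeasurable

lemma rtail_plusPart_of_nonneg {x : ℝ} (hx : 0 ≤ x) : rtail (plusPart ν) x = rtail ν x := by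
  rw [rtail, rtail, plusPart_Ioi_of_nonneg hx]

lemma tailConv_plusPart_of_nonneg {x : ℝ} (hx : 0 ≤ x) :
    tailConv (plusPart ν) x = tailConv ν x := by
  refine intervalIntegral.integral_congr fun y hy => ?_
  rw [uIcc_of_le hx] at hy
  rw [rtail_plusPart_of_nonneg hy.1, rtail_plusPart_of_nonneg (sub_nonneg.2 hy.2)]

lemma memSstar_plusPart [IsProbabilityMeasure ν] (hν : MemSstar ν) : MemSstar (plusPart ν) := by
  refine ⟨fun x => ?_, hν.2.congr' ?_⟩
  · rcases lt_or_ge x 0 with hx | hx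
    · simp [plusPart_Ioi_of_neg hx]
    · rw [plusPart_Ioi_of_nonneg hx]
      exact hν.1 x
  · have hm : ∫ y in Ioi (0:ℝ), rtail (plusPart ν) y = ∫ y in Ioi (0:ℝ), rtail ν y :=
      setIntegral_congr_fun measurableSet_Ioi fun y hy => rtail_plusPart_of_nonneg (le_of_lt hy)
    filter_upwards [eventually_ge_atTop 0] with x hx
    rw [hm, rtail_plusPart_of_nonneg hx]
    exact congrArg (· / _) (tailConv_plusPart_of_nonneg hx).symm

end PlusPart

theorem MemSstar.subexpPos {μ : Measure ℝ} [IsProbabilityMeasure μ] (h0 : μ (Ici 0) = 1)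
    (hμ : MemSstar μ) : SubexpPos μ := by
  refine ⟨hμ.1, tendsto_order.2 ⟨fun a ha => ?_, fun b hb => ?_⟩⟩
  · have hlow : Tendsto (fun x => 2 - rtail μ x) atTop (𝓝 2) := by
      simpa using tendsto_rtail_atTop.const_sub (2:ℝ)
    filter_upwards [hlow.eventually (lt_mem_nhds ha), eventually_ge_atTop 0] with x hax hx
    refine hax.trans_le ?_
    rw [le_div_iff₀ (rtail_pos (hμ.1 x))]
    linarith [two_mul_rtail_sub_sq_le_mconv h0 hx]
  · set m := ∫ y in Ioi (0:ℝ), rtail μ y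
    obtain ⟨h, hhb, hh⟩ : ∃ h : ℝ, 2 + 2 * m / h < b ∧ 0 < h := by
      have hlim : Tendsto (fun h : ℝ => 2 + 2 * m / h) atTop (𝓝 2) := by
        simpa using tendsto_const_nhds.add ((tendsto_const_nhds (x := 2 * m)).div_atTop tendsto_id)
      exact ((hlim.eventually (gt_mem_nhds hb)).and (eventually_gt_atTop 0)).exists
    have hupper : Tendsto (fun x => (2 + 2 * (tailConv μ (x - h) / (2 * rtail μ (x - h))) / h)
        * (rtail μ (x - h) / rtail μ x)) atTop (𝓝 ((2 + 2 * m / h) * 1)) :=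
      ((tendsto_const_nhds.add (((hμ.tendsto_tailConv_div.comp
        (tendsto_atTop_add_const_right _ (-h) tendsto_id)).const_mul 2).div_const h)).mul
          (hμ.longTailed.2 h hh))
    rw [mul_one] at hupper
    filter_upwards [hupper.eventually (gt_mem_nhds hhb), eventually_ge_atTop (2 * h)]
      with x hbx hx
    refine lt_of_le_of_lt ?_ hbx
    have hrxh := (rtail_pos (hμ.1 (x - h))).ne'
    calc (mconv μ μ (Ioi x)).toReal / rtail μ x
        ≤ (2 * rtail μ (x - h) + tailConv μ (x - h) / h) / rtail μ x :=
          div_le_div_of_nonneg_right (mconv_self_Ioi_le hh hx) (rtail_nonneg x)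
      _ = _ := by field_simp

/-- **Corollary (Klüppelberg)**: if a distribution function `G` on `ℝ` belongs to the
class `S*`, then `G` is subexponential. -/
theorem Sstar_subexponential (ν : Measure ℝ) [IsProbabilityMeasure ν]
    (h : MemSstar ν) : Subexponential ν :=
  (memSstar_plusPart h).subexpPos plusPart_Ici_zero
end
end

section
/- Suppose there exists a stopping time σ such that P(σ > 0) > 0, P(S_σ ≤ 0) = 1 and lim_{x→∞} δ_σ(x) = 0. Then lim_{x→∞} δ_τ(x) = 0, where τ = min{n ≥ 1 : S_n ≤ 0}. -/
open MeasureTheory ProbabilityTheory Filter Set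
open scoped ENNReal ENat

noncomputable section

/-- The event `A_{σ,2}(x) = {μ(x) ≤ σ, S_{μ(x)-1} > h(x)}`, where
`μ(x) = min{n : S_n > x}` is the first passage time over level `x`. -/
def eventA2 {Ω : Type*} (ξ : ℕ → Ω → ℝ) (σ : Ω → ℕ) (h : ℝ → ℝ) (x : ℝ) : Set Ω :=
  {ω | ∃ n : ℕ, n ≤ σ ω ∧ (∀ k, k < n → walk ξ k ω ≤ x) ∧ x < walk ξ n ω ∧
    h x < walk ξ (n - 1) ω}

/-- The event `A_{τ,2}(x)` with `τ = min{n ≥ 1 : S_n ≤ 0}`:  here `μ(x)` is the first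
passage time over level `x` and the requirement `μ(x) ≤ τ` is expressed by
`S_k > 0` for all `1 ≤ k < μ(x)`. -/
def eventA2tau {Ω : Type*} (ξ : ℕ → Ω → ℝ) (h : ℝ → ℝ) (x : ℝ) : Set Ω :=
  {ω | ∃ n : ℕ, (∀ k, 1 ≤ k → k < n → 0 < walk ξ k ω) ∧
    (∀ k, k < n → walk ξ k ω ≤ x) ∧ x < walk ξ n ω ∧ h x < walk ξ (n - 1) ω}

/-- `δ(x) = sup_{y ≥ x} P(A₂(y)) / F̄(y)` (valued in `ℝ≥0∞`). -/
def deltaSup {Ω : Type*} [MeasurableSpace Ω] (P : Measure Ω) (μ : Measure ℝ)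
    (A : ℝ → Set Ω) (x : ℝ) : ℝ≥0∞ :=
  ⨆ y ∈ Set.Ici x, P (A y) / μ (Set.Ioi y)


/-!
Let `B = {σ = 0}`, an `𝓕 0`-event. On `{σ ≥ 1, S_σ ≤ 0}` the walk leaves `(0, ∞)` by time `σ`,
so `τ ≤ σ` and `A_{τ,2}(y) ⊆ A_{σ,2}(y)`; hence, as `S_σ ≤ 0` a.s.,
`P(A_{τ,2}(y)) ≤ P(A_{σ,2}(y)) + P(A_{τ,2}(y) ∩ B)`. The event `A_{τ,2}(y)` depends only on the
increments, which are jointly independent of `𝓕 0`, so the last term is `P(A_{τ,2}(y)) P(B)`.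
Since `P(B) < 1`, this gives `δ_τ ≤ δ_σ / (1 - P(B))`.
-/

namespace ProbabilityTheory

variable {Ω : Type*} {m0 : MeasurableSpace Ω} {P : Measure Ω} [IsProbabilityMeasure P]

lemma indep_sup_of_indep_of_indep_sup {m₁ m₂ m₃ : MeasurableSpace Ω}
    (h₁ : m₁ ≤ m0) (h₂ : m₂ ≤ m0) (h₃ : m₃ ≤ m0)
    (h₁₃ : Indep m₁ m₃ P) (h₂₁₃ : Indep m₂ (m₁ ⊔ m₃) P) :
    Indep (m₁ ⊔ m₂) m₃ P := by
  let p : Set (Set Ω) := {s | ∃ s₁ s₂, MeasurableSet[m₁] s₁ ∧ MeasurableSet[m₂] s₂ ∧ s = s₁ ∩ s₂}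
  have hp_gen : m₁ ⊔ m₂ = MeasurableSpace.generateFrom p := by
    refine le_antisymm (sup_le ?_ ?_) (MeasurableSpace.generateFrom_le ?_)
    · exact fun s hs ↦ MeasurableSpace.measurableSet_generateFrom
        ⟨s, univ, hs, .univ, (inter_univ s).symm⟩
    · exact fun s hs ↦ MeasurableSpace.measurableSet_generateFrom
        ⟨univ, s, .univ, hs, (univ_inter s).symm⟩
    · rintro _ ⟨s₁, s₂, hs₁, hs₂, rfl⟩
      exact (le_sup_left (b := m₂) _ hs₁).inter (le_sup_right (a := m₁) _ hs₂)
  have hp_pi : IsPiSystem p := by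
    rintro _ ⟨s₁, s₂, hs₁, hs₂, rfl⟩ _ ⟨t₁, t₂, ht₁, ht₂, rfl⟩ -
    exact ⟨s₁ ∩ t₁, s₂ ∩ t₂, hs₁.inter ht₁, hs₂.inter ht₂, inter_inter_inter_comm _ _ _ _⟩
  refine IndepSets.indep (sup_le h₁ h₂) h₃ hp_pi (@MeasurableSpace.isPiSystem_measurableSet Ω m₃)
    hp_gen (@MeasurableSpace.generateFrom_measurableSet Ω m₃).symm ((IndepSets_iff _ _ _).2 ?_)
  rintro _ t ⟨s₁, s₂, hs₁, hs₂, rfl⟩ ht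
  have hs₁' : MeasurableSet[m₁ ⊔ m₃] s₁ := le_sup_left (b := m₃) _ hs₁
  have hs₁t : MeasurableSet[m₁ ⊔ m₃] (s₁ ∩ t) := hs₁'.inter (le_sup_right (a := m₁) _ ht)
  have h₁₃' := (Indep_iff _ _ _).1 h₁₃
  have h₂₁₃' := (Indep_iff _ _ _).1 h₂₁₃
  calc P (s₁ ∩ s₂ ∩ t) = P (s₂ ∩ (s₁ ∩ t)) := by rw [inter_comm s₁, inter_assoc]
    _ = P s₂ * (P s₁ * P t) := by rw [h₂₁₃' _ _ hs₂ hs₁t, h₁₃' _ _ hs₁ ht]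
    _ = P (s₁ ∩ s₂) * P t := by rw [inter_comm s₁, h₂₁₃' _ _ hs₂ hs₁', mul_assoc]

lemma indep_iSup_comap_of_indep_past {β : Type*} [MeasurableSpace β] {ξ : ℕ → Ω → β}
    {𝓕 : ℕ → MeasurableSpace Ω} (hmono : Monotone 𝓕) (hle : ∀ n, 𝓕 n ≤ m0)
    (hadapt : ∀ n, Measurable[𝓕 (n + 1)] (ξ n))
    (hindep : ∀ n, Indep (MeasurableSpace.comap (ξ n) inferInstance) (𝓕 n) P) :
    Indep (⨆ n, MeasurableSpace.comap (ξ n) inferInstance) (𝓕 0) P := by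
  set c : ℕ → MeasurableSpace Ω := fun n ↦ MeasurableSpace.comap (ξ n) inferInstance
  have hc_le : ∀ n, c n ≤ 𝓕 (n + 1) := fun n ↦ (hadapt n).comap_le
  have hpast_le : ∀ n, ⨆ k < n, c k ≤ 𝓕 n :=
    fun n ↦ iSup₂_le fun k hk ↦ (hc_le k).trans (hmono hk)
  have hpast_indep : ∀ n, Indep (⨆ k < n, c k) (𝓕 0) P := by
    intro n
    induction n with
    | zero => simpa using indep_bot_left (𝓕 0)
    | succ n ih =>
      rw [Nat.iSup_lt_succ]
      exact indep_sup_of_indep_of_indep_sup ((hpast_le n).trans (hle n))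
        ((hc_le n).trans (hle _)) (hle 0) ih
        (indep_of_indep_of_le_right (hindep n) (sup_le (hpast_le n) (hmono n.zero_le)))
  rw [← biSup_lt_eq_iSup]
  exact indep_iSup_of_monotone hpast_indep (fun n ↦ (hpast_le n).trans (hle n)) (hle 0)
    fun a b hab ↦ biSup_mono fun k hk ↦ hk.trans_le hab

end ProbabilityTheory

section RandomWalk

variable {Ω : Type*}

lemma measurable_walk {m : MeasurableSpace Ω} {ξ : ℕ → Ω → ℝ} (hξ : ∀ k, Measurable (ξ k))
    (n : ℕ) : Measurable (walk ξ n) :=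
  Finset.measurable_fun_sum _ fun k _ ↦ hξ k

lemma measurableSet_eventA2tau {m : MeasurableSpace Ω} {ξ : ℕ → Ω → ℝ}
    (hξ : ∀ k, Measurable (ξ k)) (h : ℝ → ℝ) (y : ℝ) : MeasurableSet (eventA2tau ξ h y) := by
  have hS := measurable_walk hξ
  simp only [eventA2tau, ofPred_exists, ofPred_and, ofPred_forall]
  refine .iUnion fun n ↦ .inter ?_ (.inter ?_ (.inter ?_ ?_))
  · exact .iInter fun k ↦ .iInter fun _ ↦ .iInter fun _ ↦ measurableSet_lt measurable_const (hS k)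
  · exact .iInter fun k ↦ .iInter fun _ ↦ measurableSet_le (hS k) measurable_const
  · exact measurableSet_lt measurable_const (hS n)
  · exact measurableSet_lt measurable_const (hS (n - 1))

lemma eventA2tau_inter_subset (ξ : ℕ → Ω → ℝ) (σ : Ω → ℕ) (h : ℝ → ℝ) (y : ℝ) :
    eventA2tau ξ h y ∩ {ω | walk ξ (σ ω) ω ≤ 0} ⊆
      eventA2 ξ σ h y ∪ (eventA2tau ξ h y ∩ {ω | σ ω = 0}) := by
  rintro ω ⟨hA, hσ⟩
  rcases Nat.eq_zero_or_pos (σ ω) with h0 | hpos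
  · exact .inr ⟨hA, h0⟩
  · obtain ⟨n, hpos_before, hle_before, hcross, hh⟩ := hA
    refine .inl ⟨n, not_lt.1 fun hσn ↦ ?_, hle_before, hcross, hh⟩
    exact (hpos_before _ hpos hσn).not_ge hσ

end RandomWalk

lemma ENNReal.le_inv_one_sub_mul_of_le_add_mul {a c q : ℝ≥0∞} (ha : a ≠ ∞) (hq : q < 1)
    (h : a ≤ c + a * q) : a ≤ (1 - q)⁻¹ * c := by
  rw [← ENNReal.div_eq_inv_mul, ENNReal.le_div_iff_mul_le (.inl (tsub_pos_of_lt hq).ne')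
    (.inl (ENNReal.sub_ne_top ENNReal.one_ne_top)), ENNReal.mul_sub fun _ _ ↦ ha, mul_one]
  exact tsub_le_iff_right.2 h

lemma tendsto_deltaSup_of_le_const_mul {Ω : Type*} [MeasurableSpace Ω] {P : Measure Ω}
    {μ : Measure ℝ} {A B : ℝ → Set Ω} {c : ℝ≥0∞} (hc : c ≠ ∞) (hAB : ∀ y, P (A y) ≤ c * P (B y))
    (hB : Tendsto (deltaSup P μ B) atTop (nhds 0)) :
    Tendsto (deltaSup P μ A) atTop (nhds 0) := by
  have hle : ∀ x, deltaSup P μ A x ≤ c * deltaSup P μ B x := fun x ↦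
    iSup₂_le fun y hy ↦ calc
      P (A y) / μ (Ioi y) ≤ c * (P (B y) / μ (Ioi y)) := by
        rw [← mul_div_assoc]; exact ENNReal.div_le_div_right (hAB y) _
      _ ≤ c * deltaSup P μ B x := by
        gcongr; exact le_iSup₂ (f := fun y (_ : y ∈ Ici x) ↦ P (B y) / μ (Ioi y)) y hy
  have hcB : Tendsto (fun x ↦ c * deltaSup P μ B x) atTop (nhds 0) := by
    simpa using ENNReal.Tendsto.const_mul hB (.inr hc)
  exact tendsto_of_tendsto_of_tendsto_of_le_of_le tendsto_const_nhds hcB (fun _ ↦ zero_le) hle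

theorem deltaTau_of_deltaSigma_general
    {Ω : Type*} [MeasurableSpace Ω] (P : Measure Ω) [IsProbabilityMeasure P]
    (ξ : ℕ → Ω → ℝ) (μ : Measure ℝ)
    (h : ℝ → ℝ)
    (𝓕 : ℕ → MeasurableSpace Ω) (hFmono : Monotone 𝓕)
    (hFle : ∀ n, 𝓕 n ≤ ‹MeasurableSpace Ω›)
    (hFadapt : ∀ n, Measurable[𝓕 (n + 1)] (ξ n))
    (hFindep : ∀ n, Indep (MeasurableSpace.comap (ξ n) inferInstance) (𝓕 n) P)
    (σ : Ω → ℕ) (hstop : ∀ n : ℕ, MeasurableSet[𝓕 n] {ω | σ ω ≤ n})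
    (hσpos : 0 < P {ω | 0 < σ ω})
    (hσneg : P {ω | walk ξ (σ ω) ω ≤ 0} = 1)
    (hσ : Filter.Tendsto (deltaSup P μ (eventA2 ξ σ h)) Filter.atTop (nhds 0)) :
    Filter.Tendsto (deltaSup P μ (eventA2tau ξ h)) Filter.atTop (nhds 0) := by
  let B := {ω | σ ω = 0}
  have hB : MeasurableSet[𝓕 0] B := by simpa only [Nat.le_zero] using hstop 0
  have hB_lt : P B < 1 := by
    have hBc : {ω | 0 < σ ω} = Bᶜ := by ext; simp [B, pos_iff_ne_zero]
    rw [hBc, prob_compl_eq_one_sub (hFle 0 _ hB)] at hσpos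
    exact tsub_pos_iff_lt.1 hσpos
  have hξ : ∀ n, Measurable (ξ n) := fun n ↦ (hFadapt n).mono (hFle _) le_rfl
  have hindep := indep_iSup_comap_of_indep_past hFmono hFle hFadapt hFindep
  have hA_meas : ∀ y, MeasurableSet[⨆ n, MeasurableSpace.comap (ξ n) inferInstance]
      (eventA2tau ξ h y) :=
    measurableSet_eventA2tau (fun n ↦ measurable_iff_comap_le.2
      (le_iSup (fun k ↦ MeasurableSpace.comap (ξ k) inferInstance) n)) h
  refine tendsto_deltaSup_of_le_const_mul (ENNReal.inv_ne_top.2 (tsub_pos_of_lt hB_lt).ne')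
    (fun y ↦ ?_) hσ
  refine ENNReal.le_inv_one_sub_mul_of_le_add_mul (measure_ne_top _ _) hB_lt ?_
  calc P (eventA2tau ξ h y) = P ({ω | walk ξ (σ ω) ω ≤ 0} ∩ eventA2tau ξ h y) := by
        rw [Measure.measure_inter_eq_of_measure_eq (measurableSet_eventA2tau hξ h y)
          (hσneg.trans measure_univ.symm) (subset_univ _) (measure_ne_top _ _), univ_inter]
    _ ≤ P (eventA2 ξ σ h y ∪ (eventA2tau ξ h y ∩ B)) :=
        measure_mono (inter_comm .. ▸ eventA2tau_inter_subset ξ σ h y)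
    _ ≤ P (eventA2 ξ σ h y) + P (eventA2tau ξ h y ∩ B) := measure_union_le _ _
    _ = P (eventA2 ξ σ h y) + P (eventA2tau ξ h y) * P B := by
        rw [(Indep_iff _ _ _).1 hindep _ _ (hA_meas y) hB]

/-- **Lemma 4(ii)** (Foss–Zachary).  Under NEG and LT, suppose there exists a stopping
time `σ` such that `P(σ > 0) > 0`, `P(S_σ ≤ 0) = 1` and `δ_σ(x) → 0` as `x → ∞`.
Then `δ_τ(x) → 0` as `x → ∞`, where `τ = min{n ≥ 1 : S_n ≤ 0}`. -/
theorem deltaTau_of_deltaSigma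
    {Ω : Type*} [MeasurableSpace Ω] (P : Measure Ω) [IsProbabilityMeasure P]
    (ξ : ℕ → Ω → ℝ) (μ : Measure ℝ) [IsProbabilityMeasure μ]
    (hmeas : ∀ n, Measurable (ξ n))
    (hlaw : ∀ n, P.map (ξ n) = μ)
    (hiid : iIndepFun ξ P)
    (m : ℝ) (hm : 0 < m) (hint : Integrable id μ) (hmean : (∫ x, x ∂μ) = -m)
    (hlt : LongTailed μ)
    (h : ℝ → ℝ) (hh0 : ∀ x, 0 ≤ h x) (hh1 : ∀ x, 0 ≤ x → h x ≤ x / 2)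
    (hh2 : Filter.Tendsto h Filter.atTop Filter.atTop)
    (hh3 : Filter.Tendsto (fun x => rtail μ (x - h x) / rtail μ x) Filter.atTop (nhds 1))
    (hh4 : ∃ x₀ : ℝ, ∀ x t : ℝ, x₀ ≤ x → 0 ≤ t → h (x + t) ≤ h x + t)
    (𝓕 : ℕ → MeasurableSpace Ω) (hFmono : Monotone 𝓕)
    (hFle : ∀ n, 𝓕 n ≤ ‹MeasurableSpace Ω›)
    (hFadapt : ∀ n, Measurable[𝓕 (n + 1)] (ξ n))
    (hFindep : ∀ n, Indep (MeasurableSpace.comap (ξ n) inferInstance) (𝓕 n) P)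
    (σ : Ω → ℕ) (hstop : ∀ n : ℕ, MeasurableSet[𝓕 n] {ω | σ ω ≤ n})
    (hσpos : 0 < P {ω | 0 < σ ω})
    (hσneg : P {ω | walk ξ (σ ω) ω ≤ 0} = 1)
    (hσ : Filter.Tendsto (deltaSup P μ (eventA2 ξ σ h)) Filter.atTop (nhds 0)) :
    Filter.Tendsto (deltaSup P μ (eventA2tau ξ h)) Filter.atTop (nhds 0) :=
  deltaTau_of_deltaSigma_general P ξ μ h 𝓕 hFmono hFle hFadapt hFindep σ hstop hσpos hσneg hσ
end
end
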